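/- arXiv:2404.08608 — 4 statements merged into one kernel-verified Lean document; each statement's English description precedes it below -/
import Mathlib

section
/- The Klein–Beltrami distance satisfies the triangle inequality: for all points x, y, z in the open unit ball of n-dimensional Euclidean space, d_K(x,z) ≤ d_K(x,y) + d_K(y,z). -/
open RealInnerProductSpace

/-- Real inverse hyperbolic cosine, defined on `[1, ∞)`. -/
noncomputable def arcosh (x : ℝ) : ℝ := Real.log (x + Real.sqrt (x ^ 2 - 1))

/-- The argument of `arcosh` in the Klein–Beltrami distance. -/
noncomputable def kleinArg {n : ℕ} (x y : EuclideanSpace ℝ (Fin n)) : ℝ :=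
  (1 - ⟪x, y⟫) / Real.sqrt ((1 - ‖x‖ ^ 2) * (1 - ‖y‖ ^ 2))

/-- The Klein–Beltrami distance on the open unit ball. -/
noncomputable def dK {n : ℕ} (x y : EuclideanSpace ℝ (Fin n)) : ℝ := arcosh (kleinArg x y)

/-!
The map `x ↦ (1, x) / √(1 - ‖x‖²)` sends the unit ball into the hyperboloid `t² - ‖v‖² = 1`
in `ℝ × E` and turns `kleinArg` into the Minkowski form `s t - ⟪v, w⟫`. For points `P, Q, R`
of the hyperboloid let `A, B, C` be the Minkowski products of `P, Q`, of `Q, R` and of `P, R`.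
The form is negative semidefinite on the orthogonal complement of the timelike vector `Q`, so
Cauchy–Schwarz there for `P - A Q` and `R - B Q` gives `(C - AB)² ≤ (A² - 1)(B² - 1)`.
Hence `C ≤ AB + √(A² - 1) √(B² - 1) = cosh (arcosh A + arcosh B)`.
-/

section Minkowski

variable {E : Type*} [NormedAddCommGroup E] [InnerProductSpace ℝ E]

noncomputable def minkowskiForm : LinearMap.BilinForm ℝ (ℝ × E) :=
  LinearMap.mk₂ ℝ (fun p q => p.1 * q.1 - ⟪p.2, q.2⟫)
    (fun p p' q => by simp only [Prod.fst_add, Prod.snd_add, inner_add_left]; ring)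
    (fun c p q => by
      simp only [Prod.smul_fst, Prod.smul_snd, real_inner_smul_left, smul_eq_mul]; ring)
    (fun p q q' => by simp only [Prod.fst_add, Prod.snd_add, inner_add_right]; ring)
    (fun c p q => by
      simp only [Prod.smul_fst, Prod.smul_snd, real_inner_smul_right, smul_eq_mul]; ring)

lemma minkowskiForm_apply (p q : ℝ × E) : minkowskiForm p q = p.1 * q.1 - ⟪p.2, q.2⟫ := rfl

lemma minkowskiForm_comm (p q : ℝ × E) : minkowskiForm p q = minkowskiForm q p := by
  simp only [minkowskiForm_apply, mul_comm, real_inner_comm]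

lemma minkowskiForm_self_nonpos_of_orthogonal {Q W : ℝ × E} (hQ : 0 < minkowskiForm Q Q)
    (hW : minkowskiForm W Q = 0) : minkowskiForm W W ≤ 0 := by
  obtain ⟨s, c⟩ := Q
  obtain ⟨t, w⟩ := W
  simp only [minkowskiForm_apply, real_inner_self_eq_norm_sq] at hQ hW ⊢
  have hcs := real_inner_mul_inner_self_le w c
  rw [real_inner_self_eq_norm_sq, real_inner_self_eq_norm_sq] at hcs
  have hs : 0 < s ^ 2 := by nlinarith [sq_nonneg ‖c‖]
  have hts : t ^ 2 * s ^ 2 ≤ ‖w‖ ^ 2 * s ^ 2 :=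
    calc t ^ 2 * s ^ 2 = ⟪w, c⟫ * ⟪w, c⟫ := by linear_combination (t * s + ⟪w, c⟫) * hW
      _ ≤ ‖w‖ ^ 2 * ‖c‖ ^ 2 := hcs
      _ ≤ ‖w‖ ^ 2 * s ^ 2 := by gcongr ‖w‖ ^ 2 * ?_; linarith
  linarith [le_of_mul_le_mul_right hts hs, sq t]

lemma minkowskiForm_sq_le_mul_of_orthogonal {Q U V : ℝ × E} (hQ : 0 < minkowskiForm Q Q)
    (hU : minkowskiForm U Q = 0) (hV : minkowskiForm V Q = 0) :
    minkowskiForm U V ^ 2 ≤ minkowskiForm U U * minkowskiForm V V := by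
  have hquad : ∀ r : ℝ,
      0 ≤ -minkowskiForm V V * (r * r) + -2 * minkowskiForm U V * r + -minkowskiForm U U := by
    intro r
    have := minkowskiForm_self_nonpos_of_orthogonal (W := U + r • V) hQ (by simp [hU, hV])
    simp only [map_add, map_smul, LinearMap.add_apply, LinearMap.smul_apply, smul_eq_mul,
      minkowskiForm_comm V U] at this
    linarith
  have := discrim_le_zero hquad
  rw [discrim] at this
  linarith

theorem minkowskiForm_le_mul_add_sqrt_mul_sqrt {P Q R : ℝ × E} (hP : minkowskiForm P P = 1)
    (hQ : minkowskiForm Q Q = 1) (hR : minkowskiForm R R = 1) :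
    minkowskiForm P R ≤ minkowskiForm P Q * minkowskiForm Q R
      + √(minkowskiForm P Q ^ 2 - 1) * √(minkowskiForm Q R ^ 2 - 1) := by
  generalize hPQ : minkowskiForm P Q = A
  generalize hQR : minkowskiForm Q R = B
  generalize hPR : minkowskiForm P R = C
  have hQP : minkowskiForm Q P = A := (minkowskiForm_comm Q P).trans hPQ
  have hRQ : minkowskiForm R Q = B := (minkowskiForm_comm R Q).trans hQR
  have hQpos : 0 < minkowskiForm Q Q := hQ ▸ one_pos
  have hU : minkowskiForm (P - A • Q) Q = 0 := by
    simp only [map_sub, map_smul, LinearMap.sub_apply, LinearMap.smul_apply,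
      smul_eq_mul, hPQ, hQ]; ring
  have hV : minkowskiForm (R - B • Q) Q = 0 := by
    simp only [map_sub, map_smul, LinearMap.sub_apply, LinearMap.smul_apply,
      smul_eq_mul, hRQ, hQ]; ring
  have hUU : minkowskiForm (P - A • Q) (P - A • Q) = 1 - A ^ 2 := by
    simp only [map_sub, map_smul, LinearMap.sub_apply, LinearMap.smul_apply,
      smul_eq_mul, hP, hPQ, hQP, hQ]; ring
  have hVV : minkowskiForm (R - B • Q) (R - B • Q) = 1 - B ^ 2 := by
    simp only [map_sub, map_smul, LinearMap.sub_apply, LinearMap.smul_apply,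
      smul_eq_mul, hR, hRQ, hQR, hQ]; ring
  have hUV : minkowskiForm (P - A • Q) (R - B • Q) = C - A * B := by
    simp only [map_sub, map_smul, LinearMap.sub_apply, LinearMap.smul_apply,
      smul_eq_mul, hPR, hPQ, hQR, hQ]; ring
  have hA : 0 ≤ A ^ 2 - 1 := by
    linarith [hUU ▸ minkowskiForm_self_nonpos_of_orthogonal hQpos hU]
  have hcs : (C - A * B) ^ 2 ≤ (A ^ 2 - 1) * (B ^ 2 - 1) := by
    have := minkowskiForm_sq_le_mul_of_orthogonal hQpos hU hV
    rw [hUU, hVV, hUV] at this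
    linarith
  rw [← Real.sqrt_mul hA]
  linarith [le_abs_self (C - A * B), Real.abs_le_sqrt hcs]

noncomputable def kleinToHyperboloid (x : E) : ℝ × E := (√(1 - ‖x‖ ^ 2))⁻¹ • (1, x)

lemma minkowskiForm_kleinToHyperboloid_self {x : E} (hx : ‖x‖ < 1) :
    minkowskiForm (kleinToHyperboloid x) (kleinToHyperboloid x) = 1 := by
  have hx2 : 0 < 1 - ‖x‖ ^ 2 := by nlinarith [norm_nonneg x]
  simp only [kleinToHyperboloid, map_smul, LinearMap.smul_apply, minkowskiForm_apply,
    real_inner_self_eq_norm_sq, smul_eq_mul]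
  rw [← mul_assoc, ← mul_inv, Real.mul_self_sqrt hx2.le, mul_one, inv_mul_cancel₀ hx2.ne']

end Minkowski

theorem Real.arcosh_le_arcosh_add_arcosh {a b c : ℝ} (ha : 1 ≤ a) (hb : 1 ≤ b) (hc : 0 < c)
    (h : c ≤ a * b + √(a ^ 2 - 1) * √(b ^ 2 - 1)) :
    Real.arcosh c ≤ Real.arcosh a + Real.arcosh b := by
  have hsum : 0 ≤ Real.arcosh a + Real.arcosh b :=
    add_nonneg (Real.arcosh_nonneg ha) (Real.arcosh_nonneg hb)
  have hcosh :
      Real.cosh (Real.arcosh a + Real.arcosh b) = a * b + √(a ^ 2 - 1) * √(b ^ 2 - 1) := by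
    rw [Real.cosh_add, Real.cosh_arcosh ha, Real.cosh_arcosh hb, Real.sinh_arcosh ha,
      Real.sinh_arcosh hb]
  calc Real.arcosh c ≤ Real.arcosh (Real.cosh (Real.arcosh a + Real.arcosh b)) :=
        (Real.arcosh_le_arcosh hc (Real.cosh_pos _)).2 (hcosh ▸ h)
    _ = Real.arcosh a + Real.arcosh b := Real.arcosh_cosh hsum

lemma arcosh_eq_real_arcosh : arcosh = Real.arcosh := rfl

section Klein

variable {n : ℕ}

lemma one_le_kleinArg {x y : EuclideanSpace ℝ (Fin n)} (hx : ‖x‖ < 1) (hy : ‖y‖ < 1) :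
    1 ≤ kleinArg x y := by
  have hx0 := norm_nonneg x
  have hy0 := norm_nonneg y
  have hS0 : 0 < √((1 - ‖x‖ ^ 2) * (1 - ‖y‖ ^ 2)) :=
    Real.sqrt_pos.2 (mul_pos (by nlinarith) (by nlinarith))
  rw [kleinArg, le_div_iff₀ hS0, one_mul]
  calc √((1 - ‖x‖ ^ 2) * (1 - ‖y‖ ^ 2))
      ≤ √((1 - ‖x‖ * ‖y‖) ^ 2) := Real.sqrt_le_sqrt (by nlinarith [sq_nonneg (‖x‖ - ‖y‖)])
    _ = 1 - ‖x‖ * ‖y‖ := Real.sqrt_sq (by nlinarith)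
    _ ≤ 1 - ⟪x, y⟫ := by linarith [real_inner_le_norm x y]

lemma kleinArg_eq_minkowskiForm {x : EuclideanSpace ℝ (Fin n)} (hx : ‖x‖ ≤ 1)
    (y : EuclideanSpace ℝ (Fin n)) :
    kleinArg x y = minkowskiForm (kleinToHyperboloid x) (kleinToHyperboloid y) := by
  have hx2 : 0 ≤ 1 - ‖x‖ ^ 2 := by nlinarith [norm_nonneg x]
  simp only [kleinArg, Real.sqrt_mul hx2, kleinToHyperboloid, map_smul, LinearMap.smul_apply,
    minkowskiForm_apply, smul_eq_mul, one_mul]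
  field_simp

end Klein

theorem dK_triangle {n : ℕ} (x y z : EuclideanSpace ℝ (Fin n))
    (hx : ‖x‖ < 1) (hy : ‖y‖ < 1) (hz : ‖z‖ < 1) :
    dK x z ≤ dK x y + dK y z := by
  simp only [dK, arcosh_eq_real_arcosh]
  refine Real.arcosh_le_arcosh_add_arcosh (one_le_kleinArg hx hy) (one_le_kleinArg hy hz)
    (one_pos.trans_le (one_le_kleinArg hx hz)) ?_
  rw [kleinArg_eq_minkowskiForm hx.le, kleinArg_eq_minkowskiForm hx.le,
    kleinArg_eq_minkowskiForm hy.le]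
  exact minkowskiForm_le_mul_add_sqrt_mul_sqrt (minkowskiForm_kleinToHyperboloid_self hx)
    (minkowskiForm_kleinToHyperboloid_self hy) (minkowskiForm_kleinToHyperboloid_self hz)
end

section
/- In the Klein–Beltrami model, Euclidean straight-line segments are geodesic: for all points x and y in the open unit ball of ℝⁿ and every t ∈ [0,1], setting z = (1 − t)·x + t·y, one has d_K(x,z) + d_K(z,y) = d_K(x,y). -/
/-!
Lift a point `p` of the ball to `(p, 1)` in Minkowski space `ℝⁿ × ℝ`, whose Lorentzian pairing
of lifts is `1 - ⟪p, q⟫`. Then `d_K(x, y)` is the hyperbolic angle between the lifts `X`, `Y` of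
`x`, `y`, and the lift of `z = (1 - t) x + t y` is `(1 - t) X + t Y`, a timelike vector in the
plane spanned by `X` and `Y` and between them. Everything thus reduces to the three numbers
`a = ⟨X, X⟩`, `b = ⟨X, Y⟩`, `c = ⟨Y, Y⟩`: writing `arcosh u = log (u + √(u² - 1))`, additivity of
the angle becomes a multiplicative identity of the arguments of `log`, because the discriminants
of the two halves are `t² (b² - a c)` and `(1 - t)² (b² - a c)`.
-/

open RealInnerProductSpace

lemma arcosh_div_sqrt {b d : ℝ} (hd : 0 < d) :
    arcosh (b / √d) = Real.log ((b + √(b ^ 2 - d)) / √d) := by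
  have hsq : (b / √d) ^ 2 - 1 = (b ^ 2 - d) / d := by
    rw [div_pow, Real.sq_sqrt hd.le]
    field_simp
  rw [arcosh, hsq, Real.sqrt_div' _ hd.le, add_div]

lemma arcosh_add_arcosh_of_mem_segment {a b c t : ℝ} (ha : 0 < a) (hb : 0 < b) (hc : 0 < c)
    (habc : a * c ≤ b ^ 2) (ht0 : 0 ≤ t) (ht1 : t ≤ 1) :
    arcosh (((1 - t) * a + t * b) /
        √(a * ((1 - t) ^ 2 * a + 2 * t * (1 - t) * b + t ^ 2 * c))) +
      arcosh (((1 - t) * b + t * c) /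
        √(((1 - t) ^ 2 * a + 2 * t * (1 - t) * b + t ^ 2 * c) * c)) =
      arcosh (b / √(a * c)) := by
  set m := (1 - t) ^ 2 * a + 2 * t * (1 - t) * b + t ^ 2 * c
  set s := √(b ^ 2 - a * c)
  have hs : s ^ 2 = b ^ 2 - a * c := Real.sq_sqrt (by linarith)
  have hm : 0 < m := by
    rcases ht0.eq_or_lt with rfl | htpos
    · simpa [m] using ha
    · have : 0 ≤ 2 * t * (1 - t) * b := by have := sub_nonneg.2 ht1; positivity
      have : 0 < t ^ 2 * c := by positivity
      have : 0 ≤ (1 - t) ^ 2 * a := by positivity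
      linarith
  have hdiscr_left : ((1 - t) * a + t * b) ^ 2 - a * m = t ^ 2 * (b ^ 2 - a * c) := by ring
  have hdiscr_right : ((1 - t) * b + t * c) ^ 2 - m * c = (1 - t) ^ 2 * (b ^ 2 - a * c) := by ring
  rw [arcosh_div_sqrt (by positivity), arcosh_div_sqrt (by positivity),
    arcosh_div_sqrt (by positivity), hdiscr_left, hdiscr_right,
    Real.sqrt_mul (sq_nonneg _), Real.sqrt_mul (sq_nonneg _), Real.sqrt_sq ht0,
    Real.sqrt_sq (sub_nonneg.2 ht1)]
  have hs0 : 0 ≤ s := Real.sqrt_nonneg _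
  have hP : 0 < (1 - t) * a + t * b + t * s := by
    nlinarith [mul_nonneg ht0 hs0, mul_nonneg ht0 hb.le, mul_nonneg (sub_nonneg.2 ht1) ha.le]
  have hQ : 0 < (1 - t) * b + t * c + (1 - t) * s := by
    nlinarith [mul_nonneg (sub_nonneg.2 ht1) hs0, mul_nonneg ht0 hc.le,
      mul_nonneg (sub_nonneg.2 ht1) hb.le]
  rw [← Real.log_mul (by positivity) (by positivity)]
  congr 1
  have hkey :
      ((1 - t) * a + t * b + t * s) * ((1 - t) * b + t * c + (1 - t) * s) = (b + s) * m := by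
    linear_combination t * (1 - t) * hs
  have hm2 : √m ^ 2 = m := Real.sq_sqrt hm.le
  rw [Real.sqrt_mul ha.le, Real.sqrt_mul hm.le, Real.sqrt_mul ha.le, div_mul_div_comm,
    div_eq_div_iff (by positivity) (by positivity)]
  linear_combination (√a * √c) * hkey - ((b + s) * √a * √c) * hm2

section InnerProductSpace

variable {E : Type*} [NormedAddCommGroup E] [InnerProductSpace ℝ E]

lemma one_sub_norm_sq_mul_le_sq_one_sub_inner {x y : E} (hx : ‖x‖ ≤ 1) (hy : ‖y‖ ≤ 1) :
    (1 - ‖x‖ ^ 2) * (1 - ‖y‖ ^ 2) ≤ (1 - ⟪x, y⟫) ^ 2 := by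
  have hxy : ⟪x, y⟫ ≤ ‖x‖ * ‖y‖ := real_inner_le_norm x y
  have hxy1 : ‖x‖ * ‖y‖ ≤ 1 := mul_le_one₀ hx (norm_nonneg y) hy
  nlinarith [sq_nonneg (‖x‖ - ‖y‖),
    mul_nonneg (sub_nonneg.2 hxy) (by linarith : (0 : ℝ) ≤ 2 - ⟪x, y⟫ - ‖x‖ * ‖y‖)]

lemma one_sub_inner_pos {x y : E} (hx : ‖x‖ < 1) (hy : ‖y‖ ≤ 1) : 0 < 1 - ⟪x, y⟫ := by
  have : ‖x‖ * ‖y‖ < 1 := by nlinarith [norm_nonneg x, norm_nonneg y]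
  linarith [real_inner_le_norm x y]

variable (x y : E) (t : ℝ)

lemma one_sub_inner_smul_add_smul_right :
    1 - ⟪x, (1 - t) • x + t • y⟫ = (1 - t) * (1 - ‖x‖ ^ 2) + t * (1 - ⟪x, y⟫) := by
  rw [inner_add_right, real_inner_smul_right, real_inner_smul_right, real_inner_self_eq_norm_sq]
  ring

lemma one_sub_inner_smul_add_smul_left :
    1 - ⟪(1 - t) • x + t • y, y⟫ = (1 - t) * (1 - ⟪x, y⟫) + t * (1 - ‖y‖ ^ 2) := by
  rw [inner_add_left, real_inner_smul_left, real_inner_smul_left, real_inner_self_eq_norm_sq]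
  ring

lemma one_sub_norm_smul_add_smul_sq :
    1 - ‖(1 - t) • x + t • y‖ ^ 2 =
      (1 - t) ^ 2 * (1 - ‖x‖ ^ 2) + 2 * t * (1 - t) * (1 - ⟪x, y⟫) + t ^ 2 * (1 - ‖y‖ ^ 2) := by
  rw [norm_add_sq_real, norm_smul, norm_smul, real_inner_smul_left, real_inner_smul_right,
    mul_pow, mul_pow, Real.norm_eq_abs, Real.norm_eq_abs, sq_abs, sq_abs]
  ring

end InnerProductSpace

theorem dK_segment_geodesic {n : ℕ} (x y : EuclideanSpace ℝ (Fin n))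
    (hx : ‖x‖ < 1) (hy : ‖y‖ < 1) (t : ℝ) (ht : t ∈ Set.Icc (0 : ℝ) 1) :
    dK x ((1 - t) • x + t • y) + dK ((1 - t) • x + t • y) y = dK x y := by
  have hqx : 0 < 1 - ‖x‖ ^ 2 := by nlinarith [norm_nonneg x]
  have hqy : 0 < 1 - ‖y‖ ^ 2 := by nlinarith [norm_nonneg y]
  simp only [dK, kleinArg]
  rw [one_sub_inner_smul_add_smul_right, one_sub_inner_smul_add_smul_left,
    one_sub_norm_smul_add_smul_sq]
  exact arcosh_add_arcosh_of_mem_segment hqx (one_sub_inner_pos hx hy.le) hqy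
    (one_sub_norm_sq_mul_le_sq_one_sub_inner hx.le hy.le) ht.1 ht.2
end

section
/- (Delaunay simplex correspondence.) Let P be a finite set of points in the open unit ball 𝕂ⁿ of ℝⁿ, and for each p ∈ P let s_p = p/(2√(1 − ‖p‖²)) and w_p = ‖p‖²/(4(1 − ‖p‖²)) − 1/√(1 − ‖p‖²). For a subset σ ⊆ P, the intersection ⋂_{p∈σ} V(p) of the hyperbolic Voronoi cells of the points of σ (with cells taken inside 𝕂ⁿ with respect to the Klein–Beltrami distance) is nonempty if and only if there exists a point x with ‖x‖ < 1 lying in the Euclidean power cell of s_p for every p ∈ σ. Hence σ spans a simplex of the hyperbolic Delaunay triangulation of P if and only if the corresponding power cells have a common point inside the open unit ball. -/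
open RealInnerProductSpace

/-- Lifted center `s_p = p / (2 √(1 - ‖p‖²))`. -/
noncomputable def liftedCenter {n : ℕ} (p : EuclideanSpace ℝ (Fin n)) :
    EuclideanSpace ℝ (Fin n) :=
  (1 / (2 * Real.sqrt (1 - ‖p‖ ^ 2))) • p

/-- Lifted weight `w_p = ‖p‖² / (4 (1 - ‖p‖²)) - 1 / √(1 - ‖p‖²)`. -/
noncomputable def liftedWeight {n : ℕ} (p : EuclideanSpace ℝ (Fin n)) : ℝ :=
  ‖p‖ ^ 2 / (4 * (1 - ‖p‖ ^ 2)) - 1 / Real.sqrt (1 - ‖p‖ ^ 2)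

/-- Euclidean power distance of `x` to a center `s` with weight `w`. -/
noncomputable def powerDist {n : ℕ} (x s : EuclideanSpace ℝ (Fin n)) (w : ℝ) : ℝ :=
  ‖x - s‖ ^ 2 - w

/-! For `x` in the ball, `kleinArg x p = c_x(p) / √(1 - ‖x‖²)` and the power distance of `x` to
`(s_p, w_p)` is `‖x‖² + c_x(p)`, where `c_x(p) = (1 - ⟪x, p⟫) / √(1 - ‖p‖²)`. Since `arcosh` is
increasing, both the Klein–Beltrami distance and the power distance from a fixed `x` order the
points of `P` as `c_x` does, so the Voronoi cells and the power cells agree inside the ball. -/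

lemma one_sub_norm_sq_pos {E : Type*} [SeminormedAddCommGroup E] {p : E} (hp : ‖p‖ < 1) :
    0 < 1 - ‖p‖ ^ 2 :=
  sub_pos.2 (pow_lt_one₀ (norm_nonneg p) hp two_ne_zero)

lemma real_inner_lt_one {F : Type*} [SeminormedAddCommGroup F] [InnerProductSpace ℝ F] {x y : F}
    (hx : ‖x‖ < 1) (hy : ‖y‖ < 1) : ⟪x, y⟫ < 1 :=
  (real_inner_le_norm x y).trans_lt (mul_lt_one_of_nonneg_of_lt_one_left (norm_nonneg x) hx hy.le)

lemma kleinArg_pos {n : ℕ} {x p : EuclideanSpace ℝ (Fin n)} (hx : ‖x‖ < 1) (hp : ‖p‖ < 1) :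
    0 < kleinArg x p :=
  div_pos (sub_pos.2 (real_inner_lt_one hx hp))
    (Real.sqrt_pos.2 (mul_pos (one_sub_norm_sq_pos hx) (one_sub_norm_sq_pos hp)))

lemma kleinArg_eq {n : ℕ} {x : EuclideanSpace ℝ (Fin n)} (hx : ‖x‖ < 1)
    (p : EuclideanSpace ℝ (Fin n)) :
    kleinArg x p = (1 - ⟪x, p⟫) / Real.sqrt (1 - ‖p‖ ^ 2) / Real.sqrt (1 - ‖x‖ ^ 2) := by
  rw [kleinArg, Real.sqrt_mul (one_sub_norm_sq_pos hx).le, div_mul_eq_div_div_swap]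

lemma powerDist_liftedCenter_liftedWeight {n : ℕ} (x : EuclideanSpace ℝ (Fin n))
    {p : EuclideanSpace ℝ (Fin n)} (hp : ‖p‖ < 1) :
    powerDist x (liftedCenter p) (liftedWeight p)
      = ‖x‖ ^ 2 + (1 - ⟪x, p⟫) / Real.sqrt (1 - ‖p‖ ^ 2) := by
  have hsq := Real.sq_sqrt (one_sub_norm_sq_pos hp).le
  have hs : 0 < Real.sqrt (1 - ‖p‖ ^ 2) := Real.sqrt_pos.2 (one_sub_norm_sq_pos hp)
  rw [powerDist, liftedCenter, liftedWeight, norm_sub_sq_real, real_inner_smul_right, norm_smul,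
    Real.norm_of_nonneg (by positivity)]
  set s := Real.sqrt (1 - ‖p‖ ^ 2)
  rw [← hsq]
  field_simp
  ring

lemma dK_le_dK_iff_powerDist_le {n : ℕ} {x p q : EuclideanSpace ℝ (Fin n)} (hx : ‖x‖ < 1)
    (hp : ‖p‖ < 1) (hq : ‖q‖ < 1) :
    dK x p ≤ dK x q ↔
      powerDist x (liftedCenter p) (liftedWeight p)
        ≤ powerDist x (liftedCenter q) (liftedWeight q) := by
  rw [dK, dK, arcosh_eq_real_arcosh,
    Real.arcosh_le_arcosh (kleinArg_pos hx hp) (kleinArg_pos hx hq), kleinArg_eq hx,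
    kleinArg_eq hx, div_le_div_iff_of_pos_right (Real.sqrt_pos.2 (one_sub_norm_sq_pos hx)),
    powerDist_liftedCenter_liftedWeight x hp, powerDist_liftedCenter_liftedWeight x hq,
    add_le_add_iff_left]

theorem delaunay_simplex_correspondence {n : ℕ} (P : Finset (EuclideanSpace ℝ (Fin n)))
    (hP : ∀ p ∈ P, ‖p‖ < 1) (σ : Finset (EuclideanSpace ℝ (Fin n))) (hσ : σ ⊆ P) :
    (∃ x : EuclideanSpace ℝ (Fin n), ‖x‖ < 1 ∧ ∀ p ∈ σ, ∀ q ∈ P, dK x p ≤ dK x q) ↔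
      (∃ x : EuclideanSpace ℝ (Fin n), ‖x‖ < 1 ∧ ∀ p ∈ σ, ∀ q ∈ P,
        powerDist x (liftedCenter p) (liftedWeight p)
          ≤ powerDist x (liftedCenter q) (liftedWeight q)) :=
  exists_congr fun _ => and_congr_right fun hx => forall₂_congr fun p hp => forall₂_congr
    fun q hq => dK_le_dK_iff_powerDist_le hx (hP p (hσ hp)) (hP q hq)
end

section
/- The central projection from the Lorentz hyperboloid to the Klein–Beltrami ball is an isometry: for all z, z' ∈ 𝕃ⁿ, writing x = (z₁/z₀, …, zₙ/z₀) and y = (z₁'/z₀', …, zₙ'/z₀'), one has (1 − ⟨x,y⟩)/√((1 − ‖x‖²)(1 − ‖y‖²)) = −⟨z,z'⟩_𝓛, and hence d_K(x,y) = arccosh(−⟨z,z'⟩_𝓛) = d_𝕃(z,z'). -/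
open RealInnerProductSpace

/-- The Minkowski (Lorentzian) bilinear form on `ℝ^{n+1}`. -/
noncomputable def lorentzInner {n : ℕ} (z z' : Fin (n + 1) → ℝ) : ℝ :=
  -(z 0 * z' 0) + ∑ i : Fin n, z i.succ * z' i.succ

/-- Membership in the Lorentz hyperboloid model `𝕃ⁿ`. -/
def onHyperboloid {n : ℕ} (z : Fin (n + 1) → ℝ) : Prop :=
  lorentzInner z z = -1 ∧ 0 < z 0

/-- The Lorentz distance on the hyperboloid. -/
noncomputable def dL {n : ℕ} (z z' : Fin (n + 1) → ℝ) : ℝ := arcosh (-lorentzInner z z')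

/-- Central projection from the hyperboloid to the Klein–Beltrami ball. -/
noncomputable def lorentzToKlein {n : ℕ} (z : Fin (n + 1) → ℝ) :
    EuclideanSpace ℝ (Fin n) :=
  WithLp.toLp 2 (fun i => z i.succ / z 0)

/-! Dividing by the time coordinates turns the Lorentz form into `1 - ⟪x, y⟫` up to the factor
`-z₀ z₀'`; on the hyperboloid `1 - ‖x‖² = z₀⁻²`, so the square root in `kleinArg` is exactly
`(z₀ z₀')⁻¹` and cancels that factor. -/

lemma inner_lorentzToKlein {n : ℕ} (z z' : Fin (n + 1) → ℝ) :
    ⟪lorentzToKlein z, lorentzToKlein z'⟫ =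
      (lorentzInner z z' + z 0 * z' 0) / (z 0 * z' 0) := by
  simp only [PiLp.inner_apply, RCLike.inner_apply, conj_trivial, lorentzToKlein,
    lorentzInner, neg_add_cancel_comm, Finset.sum_div, div_mul_div_comm, mul_comm (z' _)]

lemma one_sub_inner_lorentzToKlein {n : ℕ} {z z' : Fin (n + 1) → ℝ} (h0 : z 0 ≠ 0)
    (h0' : z' 0 ≠ 0) :
    1 - ⟪lorentzToKlein z, lorentzToKlein z'⟫ = -lorentzInner z z' / (z 0 * z' 0) := by
  rw [inner_lorentzToKlein]
  field_simp
  ring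

lemma one_sub_norm_sq_lorentzToKlein {n : ℕ} {z : Fin (n + 1) → ℝ} (hz : onHyperboloid z) :
    1 - ‖lorentzToKlein z‖ ^ 2 = (z 0 ^ 2)⁻¹ := by
  rw [← real_inner_self_eq_norm_sq, one_sub_inner_lorentzToKlein hz.2.ne' hz.2.ne', hz.1]
  ring

lemma kleinArg_lorentzToKlein {n : ℕ} {z z' : Fin (n + 1) → ℝ} (hz : onHyperboloid z)
    (hz' : onHyperboloid z') :
    kleinArg (lorentzToKlein z) (lorentzToKlein z') = -lorentzInner z z' := by
  have hpos : 0 < z 0 * z' 0 := mul_pos hz.2 hz'.2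
  have hsqrt : √((1 - ‖lorentzToKlein z‖ ^ 2) * (1 - ‖lorentzToKlein z'‖ ^ 2)) =
      (z 0 * z' 0)⁻¹ := by
    rw [one_sub_norm_sq_lorentzToKlein hz, one_sub_norm_sq_lorentzToKlein hz', ← mul_inv,
      ← mul_pow, ← inv_pow, Real.sqrt_sq (inv_nonneg.2 hpos.le)]
  rw [kleinArg, hsqrt, one_sub_inner_lorentzToKlein hz.2.ne' hz'.2.ne', div_inv_eq_mul,
    div_mul_cancel₀ _ hpos.ne']

theorem lorentzToKlein_isometry {n : ℕ} (z z' : Fin (n + 1) → ℝ)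
    (hz : onHyperboloid z) (hz' : onHyperboloid z') :
    kleinArg (lorentzToKlein z) (lorentzToKlein z') = -lorentzInner z z' ∧
      dK (lorentzToKlein z) (lorentzToKlein z') = arcosh (-lorentzInner z z') ∧
      dK (lorentzToKlein z) (lorentzToKlein z') = dL z z' := by
  have hkey := kleinArg_lorentzToKlein hz hz'
  exact ⟨hkey, congrArg arcosh hkey, congrArg arcosh hkey⟩
end
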